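/- Every syzygy in Syz(F) that is homogeneous of degree r+2 (i.e., has coefficients that are homogeneous linear forms) and is multihomogeneous with respect to the Z^{m+r} ⊕ Z^n multigrading, whose multidegree has e-component supported on {h, i*} ∪ {m+1,…,m+r} with h, i* ∈ {1,…,m}, and which lies in the span of S3 ∪ S4 while involving none of the variables c_{ij} in its coefficients, must be a scalar multiple of the S3-element |D_{I,J}|_{1,•} − |D_{I,J}|_{2,•} (the difference of the Laplace expansions of |D_{I,J}| along its two rows with index in {1,…,m}) for the corresponding pair (I, J). -/

import Mathlib

open MvPolynomial

namespace SM

/-- Variables of the ring `R`: `y`-variables indexed by `Fin m × Fin n` (inl)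
and `c`-variables indexed by `Fin r × Fin n` (inr). -/
abbrev Vars (m r n : ℕ) := (Fin m × Fin n) ⊕ (Fin r × Fin n)

/-- Variables of the ring `P`: `x`-variables indexed by `Fin K` (inl)
and `c`-variables indexed by `Fin r × Fin n` (inr). -/
abbrev XVars (K r n : ℕ) := Fin K ⊕ (Fin r × Fin n)

/-- The free module with basis indexed by pairs of finsets of rows and columns. -/
abbrev FreeMod (S : Type*) (a b : ℕ) := Finset (Fin a) × Finset (Fin b) → S

/-- The `(m+r) × n` matrix `D` obtained by stacking `Y = (y_{kj})` on top of `C = (c_{ij})`. -/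
noncomputable def Dmat (𝕂 : Type*) [Field 𝕂] (m r n : ℕ) :
    Matrix (Fin (m + r)) (Fin n) (MvPolynomial (Vars m r n) 𝕂) :=
  Matrix.of fun i j =>
    if h : (i : ℕ) < m then X (Sum.inl (⟨i, h⟩, j))
    else X (Sum.inr (⟨(i : ℕ) - m, by have := i.isLt; omega⟩, j))

/-- The minor of `A` on the rows `I` and columns `J`, when both have cardinality `k`
(and `0` otherwise). -/
noncomputable def minorOf {S : Type*} [CommRing S] {a b : ℕ} (k : ℕ)
    (A : Matrix (Fin a) (Fin b) S) (I : Finset (Fin a)) (J : Finset (Fin b)) : S :=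
  if h : I.card = k ∧ J.card = k then
    (Matrix.of fun s t : Fin k =>
      A ((I.orderIsoOfFin h.1 s : Fin a)) ((J.orderIsoOfFin h.2 t : Fin b))).det
  else 0

/-- The map `φ` sending `E_{I,J} ↦ |A_{I,J}|`. -/
noncomputable def phiMap {S : Type*} [CommRing S] {a b : ℕ} (k : ℕ)
    (A : Matrix (Fin a) (Fin b) S) (T : FreeMod S a b) : S :=
  ∑ p : Finset (Fin a) × Finset (Fin b), T p * minorOf k A p.1 p.2


/-- The standard basis vector `E_{I,J}` of the free module. -/
noncomputable def eVec {S : Type*} [CommRing S] {a b : ℕ}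
    (p : Finset (Fin a) × Finset (Fin b)) : FreeMod S a b := Pi.single p 1

/-- The set `{m+1, …, m+r}` of the last `r` row indices. -/
def lastRows (m r : ℕ) : Finset (Fin (m + r)) := Finset.univ.filter fun i => m ≤ (i : ℕ)

/-- The set `{1, …, m}` of the first `m` row indices. -/
def firstRows (m r : ℕ) : Finset (Fin (m + r)) := Finset.univ.filter fun i => (i : ℕ) < m

/-- The Laplace expansion, along the repeated row, of the determinant of the
`(r+2) × (r+2)` matrix obtained from `A_{I,J}` (with `|J| = r+2`) by adding an extra copy of
row `i`, viewed as an element of the free module: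
`∑_t (-1)^t d_{i, j_t} E_{I, J \ {j_t}}`. -/
noncomputable def s1El {S : Type*} [CommRing S] {a b : ℕ} (r : ℕ)
    (A : Matrix (Fin a) (Fin b) S) (i : Fin a) (I : Finset (Fin a)) (J : Finset (Fin b))
    (hJ : J.card = r + 2) : FreeMod S a b :=
  ∑ t : Fin (r + 2),
    ((-1 : S) ^ (t : ℕ) * A i (J.orderIsoOfFin hJ t)) •
      eVec (I, J.erase (J.orderIsoOfFin hJ t))

/-- The column analogue of `s1El`: the Laplace expansion, along the repeated column, of the
determinant of the matrix obtained from `A_{I,J}` (with `|I| = r+2`) by adding an extra copy of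
column `j`. -/
noncomputable def s2El {S : Type*} [CommRing S] {a b : ℕ} (r : ℕ)
    (A : Matrix (Fin a) (Fin b) S) (j : Fin b) (I : Finset (Fin a)) (J : Finset (Fin b))
    (hI : I.card = r + 2) : FreeMod S a b :=
  ∑ s : Fin (r + 2),
    ((-1 : S) ^ (s : ℕ) * A ((I.orderIsoOfFin hI s : Fin a)) j) •
      eVec (I.erase (I.orderIsoOfFin hI s), J)

/-- The Laplace expansion of `|A_{I,J}|` (with `|I| = |J| = r+2`) along its `p`-th row
(`0`-indexed), with the usual cofactor signs, viewed as an element of the free module. -/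
noncomputable def rowExp {S : Type*} [CommRing S] {a b : ℕ} (r : ℕ)
    (A : Matrix (Fin a) (Fin b) S) (I : Finset (Fin a)) (J : Finset (Fin b))
    (hI : I.card = r + 2) (hJ : J.card = r + 2) (p : Fin (r + 2)) : FreeMod S a b :=
  ∑ t : Fin (r + 2),
    ((-1 : S) ^ ((p : ℕ) + (t : ℕ)) *
        A ((I.orderIsoOfFin hI p : Fin a)) ((J.orderIsoOfFin hJ t : Fin b))) •
      eVec (I.erase (I.orderIsoOfFin hI p), J.erase (J.orderIsoOfFin hJ t))

/-- The Laplace expansion of `|A_{I,J}|` (with `|I| = |J| = r+2`) along its `q`-th column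
(`0`-indexed), with the usual cofactor signs, viewed as an element of the free module. -/
noncomputable def colExp {S : Type*} [CommRing S] {a b : ℕ} (r : ℕ)
    (A : Matrix (Fin a) (Fin b) S) (I : Finset (Fin a)) (J : Finset (Fin b))
    (hI : I.card = r + 2) (hJ : J.card = r + 2) (q : Fin (r + 2)) : FreeMod S a b :=
  ∑ s : Fin (r + 2),
    ((-1 : S) ^ ((s : ℕ) + (q : ℕ)) *
        A ((I.orderIsoOfFin hI s : Fin a)) ((J.orderIsoOfFin hJ q : Fin b))) •
      eVec (I.erase (I.orderIsoOfFin hI s), J.erase (J.orderIsoOfFin hJ q))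

/-- Kurano's Type I row syzygies `S1`. -/
def S1Set {S : Type*} [CommRing S] {a b : ℕ} (r : ℕ) (A : Matrix (Fin a) (Fin b) S) :
    Set (FreeMod S a b) :=
  {T | ∃ (I : Finset (Fin a)) (J : Finset (Fin b)) (_ : I.card = r + 1) (hJ : J.card = r + 2)
    (i : Fin a), i ∈ I ∧ T = s1El r A i I J hJ}

/-- Kurano's Type I column syzygies `S2`. -/
def S2Set {S : Type*} [CommRing S] {a b : ℕ} (r : ℕ) (A : Matrix (Fin a) (Fin b) S) :
    Set (FreeMod S a b) :=
  {T | ∃ (I : Finset (Fin a)) (J : Finset (Fin b)) (hI : I.card = r + 2) (_ : J.card = r + 1)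
    (j : Fin b), j ∈ J ∧ T = s2El r A j I J hI}

/-- The syzygies `S3`: differences of the Laplace expansions of `|A_{I,J}|` along its first row
and along its `h`-th row, `h ≥ 2` (here `0`-indexed, so `h ≥ 1`). -/
def S3Set {S : Type*} [CommRing S] {a b : ℕ} (r : ℕ) (A : Matrix (Fin a) (Fin b) S) :
    Set (FreeMod S a b) :=
  {T | ∃ (I : Finset (Fin a)) (J : Finset (Fin b)) (hI : I.card = r + 2) (hJ : J.card = r + 2)
    (h : Fin (r + 2)), 1 ≤ (h : ℕ) ∧ T = rowExp r A I J hI hJ 0 - rowExp r A I J hI hJ h}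

/-- The syzygies `S4`: differences of the Laplace expansions of `|A_{I,J}|` along its first row
and along its `k`-th column, `k ≥ 2` (here `0`-indexed, so `k ≥ 1`). -/
def S4Set {S : Type*} [CommRing S] {a b : ℕ} (r : ℕ) (A : Matrix (Fin a) (Fin b) S) :
    Set (FreeMod S a b) :=
  {T | ∃ (I : Finset (Fin a)) (J : Finset (Fin b)) (hI : I.card = r + 2) (hJ : J.card = r + 2)
    (k : Fin (r + 2)), 1 ≤ (k : ℕ) ∧ T = rowExp r A I J hI hJ 0 - colExp r A I J hI hJ k}

/-- The set `S'_1`: for `h ∈ {1,…,m}`, `I = {h} ∪ {m+1,…,m+r}` and `|J| = r+2`, the Laplace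
expansion along the repeated row `h`. -/
def S1'Set (𝕂 : Type*) [Field 𝕂] (m r n : ℕ) :
    Set (FreeMod (MvPolynomial (Vars m r n) 𝕂) (m + r) n) :=
  {T | ∃ (i : Fin (m + r)) (J : Finset (Fin n)) (hJ : J.card = r + 2),
    (i : ℕ) < m ∧ T = s1El r (Dmat 𝕂 m r n) i (insert i (lastRows m r)) J hJ}

/-- The set `S'_3`: for `|I| = |J| = r+2` with `|I ∩ {1,…,m}| = 2`, the difference of the Laplace
expansions of `|D_{I,J}|` along its two rows with index in `{1,…,m}` (which are the two smallest
rows of `I`, i.e. positions `0` and `1`). -/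
def S3'Set (𝕂 : Type*) [Field 𝕂] (m r n : ℕ) :
    Set (FreeMod (MvPolynomial (Vars m r n) 𝕂) (m + r) n) :=
  {T | ∃ (I : Finset (Fin (m + r))) (J : Finset (Fin n)) (hI : I.card = r + 2)
    (hJ : J.card = r + 2), (I ∩ firstRows m r).card = 2 ∧
    T = rowExp r (Dmat 𝕂 m r n) I J hI hJ 0 - rowExp r (Dmat 𝕂 m r n) I J hI hJ 1}

/-- The `(m+r) × n` matrix obtained by stacking `M_x = ∑ x_ℓ M_ℓ` on top of `C`. -/
noncomputable def MxC (𝕂 : Type*) [Field 𝕂] (m r n K : ℕ)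
    (M : Fin K → Matrix (Fin m) (Fin n) 𝕂) :
    Matrix (Fin (m + r)) (Fin n) (MvPolynomial (XVars K r n) 𝕂) :=
  Matrix.of fun i j =>
    if h : (i : ℕ) < m then ∑ ℓ, C (M ℓ ⟨i, h⟩ j) * X (Sum.inl ℓ)
    else X (Sum.inr (⟨(i : ℕ) - m, by have := i.isLt; omega⟩, j))

/-- The specialization homomorphism `ρ : R → P`, `y_{kj} ↦ m_{kj}(x)`, `c_{ij} ↦ c_{ij}`. -/
noncomputable def rho (𝕂 : Type*) [Field 𝕂] (m r n K : ℕ)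
    (M : Fin K → Matrix (Fin m) (Fin n) 𝕂) :
    MvPolynomial (Vars m r n) 𝕂 →ₐ[𝕂] MvPolynomial (XVars K r n) 𝕂 :=
  aeval fun v => match v with
    | Sum.inl (k, j) => ∑ ℓ, C (M ℓ k j) * X (Sum.inl ℓ)
    | Sum.inr (i, j) => X (Sum.inr (i, j))

end SM

/-!
Write `T = ∑ α_h (R_0 - R_h) + ∑ β_k (R_0 - C_k)` with `β_0 = 0`, where `R_h` and `C_k` are the
Laplace expansions of `|D_{I,J}|` along its `h`-th row and `k`-th column. Since
`{m+1,…,m+r} ⊆ I`, the rows of `D_{I,J}` at positions `p ≥ 2` are rows of `C`, and at the basis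
element `E_{I \ i_p, J \ j_t}` only `R_p` and `C_t` contribute, with total coefficient
`∓(α_p + β_t) c_{i_p j_t}`. As `T` involves no `c`-variable, `α_p + β_t = 0` for all `p ≥ 2` and
all `t`; taking `t = 0` gives `α_p = 0`, and then `p = 2` (which exists as `r ≥ 1`) gives
`β_t = 0`. What is left is `α_1 (R_0 - R_1)`.
-/

open Finset

theorem Submodule.exists_sum_eq_of_mem_span_union {R M ι κ : Type*} [Semiring R] [AddCommMonoid M]
    [Module R M] [Fintype ι] [Fintype κ] {P : ι → Prop} {Q : κ → Prop} {f : ι → M} {g : κ → M}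
    {x : M} (hx : x ∈ span R ({y | ∃ i, P i ∧ y = f i} ∪ {y | ∃ j, Q j ∧ y = g j})) :
    ∃ (α : ι → R) (β : κ → R), (∀ i, ¬ P i → α i = 0) ∧ (∀ j, ¬ Q j → β j = 0) ∧
      x = ∑ i, α i • f i + ∑ j, β j • g j := by
  have hset : {y | ∃ i, P i ∧ y = f i} ∪ {y | ∃ j, Q j ∧ y = g j} =
      Sum.elim f g '' {z | Sum.elim P Q z} := by
    ext y
    simp [eq_comm]
  rw [hset, Finsupp.mem_span_image_iff_linearCombination] at hx
  obtain ⟨l, hl, rfl⟩ := hx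
  refine ⟨fun i => l (.inl i), fun j => l (.inr j), fun i hi => ?_, fun j hj => ?_, ?_⟩
  · exact (Finsupp.mem_supported' R l).1 hl (.inl i) hi
  · exact (Finsupp.mem_supported' R l).1 hl (.inr j) hj
  · rw [Finsupp.linearCombination_apply, Finsupp.sum_fintype _ _ (by simp), Fintype.sum_sum_type]
    rfl

theorem lt_card_filter_of_orderEmbOfFin {α : Type*} [LinearOrder α] {s : Finset α} {k : ℕ}
    (h : #s = k) {P : α → Prop} [DecidablePred P] (hP : IsLowerSet {y | P y}) {p : Fin k}
    (hp : P (s.orderEmbOfFin h p)) : (p : ℕ) < #{y ∈ s | P y} := by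
  calc (p : ℕ) < #(Iic p) := by simp
    _ = #((Iic p).map (s.orderEmbOfFin h).toEmbedding) := (card_map _).symm
    _ ≤ #{y ∈ s | P y} := card_le_card fun y hy => by
        obtain ⟨q, hq, rfl⟩ := mem_map.1 hy
        exact mem_filter.2 ⟨s.orderEmbOfFin_mem h q,
          hP ((s.orderEmbOfFin h).monotone (mem_Iic.1 hq)) hp⟩

theorem eq_zero_of_smul_X_mem_supported {𝕂 σ : Type*} [Field 𝕂] {s : Set σ} {v : σ}
    (hv : v ∉ s) {c : 𝕂} (hc : c • X v ∈ supported 𝕂 s) : c = 0 := by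
  by_contra h
  refine hv ((X_mem_supported (R := 𝕂)).1 ?_)
  simpa [smul_smul, h] using Submodule.smul_mem (supported 𝕂 s).toSubmodule c⁻¹ hc

namespace SM

section Laplace

variable {S : Type*} [CommRing S] {a b : ℕ}

def cofactorIndex {k : ℕ} {I : Finset (Fin a)} {J : Finset (Fin b)} (hI : #I = k)
    (hJ : #J = k) (p t : Fin k) : Finset (Fin a) × Finset (Fin b) :=
  (I.erase (I.orderEmbOfFin hI p), J.erase (J.orderEmbOfFin hJ t))

theorem cofactorIndex_inj {k : ℕ} {I : Finset (Fin a)} {J : Finset (Fin b)} (hI : #I = k)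
    (hJ : #J = k) {p p' t t' : Fin k} :
    cofactorIndex hI hJ p t = cofactorIndex hI hJ p' t' ↔ p = p' ∧ t = t' := by
  simp [cofactorIndex, erase_inj _ (I.orderEmbOfFin_mem hI p),
    erase_inj _ (J.orderEmbOfFin_mem hJ t)]

variable (r : ℕ) (A : Matrix (Fin a) (Fin b) S) {I : Finset (Fin a)} {J : Finset (Fin b)}
  (hI : #I = r + 2) (hJ : #J = r + 2) {𝕜 : Type*} [Semiring 𝕜] [Module 𝕜 S]

theorem rowExp_eq_sum_cofactorIndex (p : Fin (r + 2)) :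
    rowExp r A I J hI hJ p = ∑ t : Fin (r + 2), ((-1) ^ ((p : ℕ) + t) *
      A (I.orderEmbOfFin hI p) (J.orderEmbOfFin hJ t)) • eVec (cofactorIndex hI hJ p t) :=
  rfl

theorem colExp_eq_sum_cofactorIndex (q : Fin (r + 2)) :
    colExp r A I J hI hJ q = ∑ s : Fin (r + 2), ((-1) ^ ((s : ℕ) + q) *
      A (I.orderEmbOfFin hI s) (J.orderEmbOfFin hJ q)) • eVec (cofactorIndex hI hJ s q) :=
  rfl

theorem rowExp_apply_cofactorIndex (p' p t : Fin (r + 2)) :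
    rowExp r A I J hI hJ p' (cofactorIndex hI hJ p t) =
      if p' = p then (-1) ^ ((p : ℕ) + t) * A (I.orderEmbOfFin hI p) (J.orderEmbOfFin hJ t)
      else 0 := by
  obtain rfl | h := eq_or_ne p' p <;>
    simp [rowExp_eq_sum_cofactorIndex, eVec, Pi.single_apply, cofactorIndex_inj, eq_comm, *]

theorem colExp_apply_cofactorIndex (q p t : Fin (r + 2)) :
    colExp r A I J hI hJ q (cofactorIndex hI hJ p t) =
      if q = t then (-1) ^ ((p : ℕ) + t) * A (I.orderEmbOfFin hI p) (J.orderEmbOfFin hJ t)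
      else 0 := by
  obtain rfl | h := eq_or_ne q t <;>
    simp [colExp_eq_sum_cofactorIndex, eVec, Pi.single_apply, cofactorIndex_inj, eq_comm, *]

/-- With `β 0 = 0`, these are the elements of the span of the `S3` and `S4` syzygies of
`(I, J)`. -/
noncomputable def laplaceDiffComb (α β : Fin (r + 2) → 𝕜) : FreeMod S a b :=
  ∑ h, α h • (rowExp r A I J hI hJ 0 - rowExp r A I J hI hJ h) +
    ∑ k, β k • (rowExp r A I J hI hJ 0 - colExp r A I J hI hJ k)

theorem laplaceDiffComb_apply_cofactorIndex (α β : Fin (r + 2) → 𝕜) {p : Fin (r + 2)}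
    (hp : p ≠ 0) (t : Fin (r + 2)) :
    laplaceDiffComb r A hI hJ α β (cofactorIndex hI hJ p t) =
      -((α p + β t) •
        ((-1) ^ ((p : ℕ) + t) * A (I.orderEmbOfFin hI p) (J.orderEmbOfFin hJ t))) := by
  simp [laplaceDiffComb, rowExp_apply_cofactorIndex, colExp_apply_cofactorIndex, hp.symm,
    add_smul, add_comm]

theorem exists_laplaceDiffComb_of_mem_span {T : FreeMod S a b}
    (hT : T ∈ Submodule.span 𝕜
      ({U | ∃ h : Fin (r + 2), 1 ≤ (h : ℕ) ∧
          U = rowExp r A I J hI hJ 0 - rowExp r A I J hI hJ h} ∪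
        {U | ∃ k : Fin (r + 2), 1 ≤ (k : ℕ) ∧
          U = rowExp r A I J hI hJ 0 - colExp r A I J hI hJ k})) :
    ∃ α β : Fin (r + 2) → 𝕜, β 0 = 0 ∧ T = laplaceDiffComb r A hI hJ α β := by
  obtain ⟨α, β, -, hβ, rfl⟩ := Submodule.exists_sum_eq_of_mem_span_union hT
  exact ⟨α, β, hβ 0 (by simp), rfl⟩

theorem laplaceDiffComb_eq_smul (α β : Fin (r + 2) → 𝕜)
    (hα : ∀ h : Fin (r + 2), 2 ≤ (h : ℕ) → α h = 0) (hβ : β = 0) :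
    laplaceDiffComb r A hI hJ α β = α 1 • (rowExp r A I J hI hJ 0 - rowExp r A I J hI hJ 1) := by
  rw [laplaceDiffComb, sum_eq_single 1]
  · simp [hβ]
  · rintro ⟨_ | _ | h, hh⟩ - h1
    · simp
    · exact absurd (Fin.ext rfl) h1
    · simp [hα ⟨h + 2, hh⟩ (by simp)]
  · simp

end Laplace

theorem card_lastRows (m r : ℕ) : #(lastRows m r) = r := by
  have := card_filter_add_card_filter_not (s := univ) (p := fun i : Fin (m + r) => (i : ℕ) < m)
  simp_all [lastRows, Fin.card_filter_val_lt]

theorem Dmat_apply_of_le (𝕂 : Type*) [Field 𝕂] {m r n : ℕ} {i : Fin (m + r)} (hi : m ≤ (i : ℕ))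
    (j : Fin n) :
    Dmat 𝕂 m r n i j = X (Sum.inr (⟨i - m, by omega⟩, j)) := by
  simp [Dmat, hi.not_gt]

theorem le_orderEmbOfFin_of_lastRows_subset {m r : ℕ} {I : Finset (Fin (m + r))}
    (hI : #I = r + 2) (hIlast : lastRows m r ⊆ I) {p : Fin (r + 2)} (hp : 2 ≤ (p : ℕ)) :
    m ≤ (I.orderEmbOfFin hI p : ℕ) := by
  have hfirst : #(I.filter fun i : Fin (m + r) => (i : ℕ) < m) = 2 := by
    have : I.filter (fun i : Fin (m + r) => (i : ℕ) < m) = I \ lastRows m r := by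
      ext i
      simp [lastRows]
    rw [this, card_sdiff_of_subset hIlast, hI, card_lastRows]
    simp
  by_contra! h
  have := lt_card_filter_of_orderEmbOfFin hI (P := fun i : Fin (m + r) => (i : ℕ) < m)
    (fun x y hxy hy => lt_of_le_of_lt (Fin.le_def.1 hxy) hy) h
  omega

end SM

open SM in
theorem stmt_15_general (𝕂 : Type*) [Field 𝕂] (m r n : ℕ) (hr : 0 < r)
    (I : Finset (Fin (m + r))) (J : Finset (Fin n))
    (hI : I.card = r + 2) (hJ : J.card = r + 2) (hIlast : lastRows m r ⊆ I)
    (T : FreeMod (MvPolynomial (Vars m r n) 𝕂) (m + r) n)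
    (hspan : T ∈ Submodule.span 𝕂
      ({U | ∃ h : Fin (r + 2), 1 ≤ (h : ℕ) ∧
          U = rowExp r (Dmat 𝕂 m r n) I J hI hJ 0 - rowExp r (Dmat 𝕂 m r n) I J hI hJ h} ∪
        {U | ∃ k : Fin (r + 2), 1 ≤ (k : ℕ) ∧
          U = rowExp r (Dmat 𝕂 m r n) I J hI hJ 0 - colExp r (Dmat 𝕂 m r n) I J hI hJ k}))
    (hy : ∀ p, T p ∈ MvPolynomial.supported 𝕂 (Set.range Sum.inl)) :
    ∃ c : 𝕂,
      T = c • (rowExp r (Dmat 𝕂 m r n) I J hI hJ 0 - rowExp r (Dmat 𝕂 m r n) I J hI hJ 1) := by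
  obtain ⟨α, β, hβ0, rfl⟩ := exists_laplaceDiffComb_of_mem_span r _ hI hJ hspan
  have key : ∀ p : Fin (r + 2), 2 ≤ (p : ℕ) → ∀ t, α p + β t = 0 := by
    intro p hp t
    have hrow := le_orderEmbOfFin_of_lastRows_subset hI hIlast hp
    have hT := hy (cofactorIndex hI hJ p t)
    rw [laplaceDiffComb_apply_cofactorIndex r _ hI hJ α β (by rintro rfl; simp at hp),
      Dmat_apply_of_le 𝕂 hrow] at hT
    have hsign : ∀ f : MvPolynomial (Vars m r n) 𝕂,
        (-1) ^ ((p : ℕ) + t) * f = ((-1 : 𝕂) ^ ((p : ℕ) + t)) • f := by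
      simp [Algebra.smul_def]
    rw [neg_mem_iff, hsign, smul_smul] at hT
    simpa using eq_zero_of_smul_X_mem_supported (by simp) hT
  have hα : ∀ p : Fin (r + 2), 2 ≤ (p : ℕ) → α p = 0 := fun p hp => by
    simpa [hβ0] using key p hp 0
  have hβ : ∀ t, β t = 0 := fun t => by
    simpa [hα ⟨2, by omega⟩ le_rfl] using key ⟨2, by omega⟩ le_rfl t
  exact ⟨α 1, laplaceDiffComb_eq_smul r _ hI hJ α β hα (funext hβ)⟩

open SM in
/-- Fix subsets `I` (with `|I| = r+2` and `{m+1,…,m+r} ⊆ I`, so that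
`I ∩ {1,…,m}` consists of two elements, which occupy the first two positions of `I`) and `J`
(with `|J| = r+2`). Every syzygy in `Syz(F)` that is homogeneous of degree `r+2` (its
coefficients are homogeneous linear forms), lies in the `𝕂`-span of the sets `S3 ∪ S4`
associated to the pair `(I, J)` (hence is multihomogeneous of the corresponding multidegree,
whose `e`-component is supported on `{h, i*} ∪ {m+1,…,m+r}` with `h, i* ∈ {1,…,m}`), and whose
coefficients involve none of the `c`-variables, must be a scalar multiple of the `S3`-element
`|D_{I,J}|_{1,•} − |D_{I,J}|_{2,•}`, the difference of the Laplace expansions of `|D_{I,J}|`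
along its two rows with index in `{1,…,m}`. -/
theorem stmt_15 (𝕂 : Type*) [Field 𝕂] (m r n : ℕ) (hm : 0 < m) (hr : 0 < r) (hrn : r ≤ n)
    (I : Finset (Fin (m + r))) (J : Finset (Fin n))
    (hI : I.card = r + 2) (hJ : J.card = r + 2) (hIlast : lastRows m r ⊆ I)
    (T : FreeMod (MvPolynomial (Vars m r n) 𝕂) (m + r) n)
    (hker : phiMap (r + 1) (Dmat 𝕂 m r n) T = 0)
    (hlin : ∀ p, (T p).IsHomogeneous 1)
    (hspan : T ∈ Submodule.span 𝕂
      ({U | ∃ h : Fin (r + 2), 1 ≤ (h : ℕ) ∧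
          U = rowExp r (Dmat 𝕂 m r n) I J hI hJ 0 - rowExp r (Dmat 𝕂 m r n) I J hI hJ h} ∪
        {U | ∃ k : Fin (r + 2), 1 ≤ (k : ℕ) ∧
          U = rowExp r (Dmat 𝕂 m r n) I J hI hJ 0 - colExp r (Dmat 𝕂 m r n) I J hI hJ k}))
    (hy : ∀ p, T p ∈ MvPolynomial.supported 𝕂 (Set.range Sum.inl)) :
    ∃ c : 𝕂,
      T = c • (rowExp r (Dmat 𝕂 m r n) I J hI hJ 0 - rowExp r (Dmat 𝕂 m r n) I J hI hJ 1) :=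
  stmt_15_general 𝕂 m r n hr I J hI hJ hIlast T hspan hy
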